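/- Let Λ > 0 and set S_Λ := 1/(4Λ). Then v(x,t) := (1 − 4Λt)^{−N/2} exp(Λ H₀(x)²/(1 − 4Λt)) satisfies ∂_t v = Δ_H v on ℝ^N × (0, S_Λ), where Δ_H is the Finsler-Laplace operator associated to H and H₀ is the dual norm of H. -/

import Mathlib

/-!
The profile is `u = f ∘ H₀²` with `f r = C exp (K r)`, `K = Λ / (1 - 4Λt)`. Writing
`g = ∇H₀(x)`, one has `∇u = 2 f'(H₀²) H₀ g`. Both `H` and `H₀` are sublinear, so their gradients
are supporting linear forms: `⟪∇H₀(x), ·⟫ ≤ H₀` with equality at `x`, and likewise for `H`.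
Playing these against each other gives `H(g) = 1`, and then the linear form `⟪x, ·⟫ / H₀(x)`
touches `H` at `g` from below; with the symmetry of `H` this forces
`∇H(a g) = sign(a) x / H₀(x)` for `a ≠ 0`. Hence the anisotropic
flux `H(∇u) ∇_ξ H(∇u)` is the radial field `2 f'(H₀²) x`, whose divergence is
`2N f'(H₀²) + 4 H₀² f''(H₀²) = 2K (N + 2K H₀²) u`, which is exactly `∂ₜ v`.
-/

open Real InnerProductSpace Set Filter Topology
open scoped Gradient RealInnerProductSpace

noncomputable def dualNorm {N : ℕ} (H : EuclideanSpace ℝ (Fin N) → ℝ)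
    (x : EuclideanSpace ℝ (Fin N)) : ℝ :=
  ⨆ ξ : {ξ : EuclideanSpace ℝ (Fin N) // ξ ≠ 0}, (inner ℝ x ξ.1 : ℝ) / H ξ.1

noncomputable def divg {N : ℕ}
    (F : EuclideanSpace ℝ (Fin N) → EuclideanSpace ℝ (Fin N))
    (x : EuclideanSpace ℝ (Fin N)) : ℝ :=
  ∑ i : Fin N, fderiv ℝ F x (EuclideanSpace.single i 1) i

noncomputable def finslerLap {N : ℕ} (H u : EuclideanSpace ℝ (Fin N) → ℝ)
    (x : EuclideanSpace ℝ (Fin N)) : ℝ :=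
  divg (fun y => H (gradient u y) • gradient H (gradient u y)) x

section Sublinear

variable {E : Type*} [NormedAddCommGroup E] [InnerProductSpace ℝ E] [CompleteSpace E]
  {f : E → ℝ} {x : E}

lemma hasDerivAt_apply_add_smul (hf : DifferentiableAt ℝ f x) (y : E) :
    HasDerivAt (fun t : ℝ => f (x + t • y)) ⟪∇ f x, y⟫_ℝ 0 := by
  have hline : HasDerivAt (fun t : ℝ => x + t • y) y 0 := by
    simpa using ((hasDerivAt_id (0 : ℝ)).smul_const y).const_add x
  have hf' : HasFDerivAt f (fderiv ℝ f x) (x + (0 : ℝ) • y) := by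
    simpa using hf.hasFDerivAt
  rw [inner_gradient_left]
  exact hf'.comp_hasDerivAt 0 hline

lemma inner_gradient_self (hsmul : ∀ c : ℝ, 0 < c → ∀ x, f (c • x) = c * f x)
    (hf : DifferentiableAt ℝ f x) : ⟪∇ f x, x⟫_ℝ = f x := by
  have hray : (fun t : ℝ => (1 + t) * f x) =ᶠ[𝓝 0] fun t => f (x + t • x) := by
    filter_upwards [Ioi_mem_nhds (show (-1 : ℝ) < 0 by norm_num)] with t ht
    rw [← hsmul _ (by linarith [mem_Ioi.1 ht]), add_smul, one_smul]
  have hlin : HasDerivAt (fun t : ℝ => (1 + t) * f x) (f x) 0 := by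
    simpa using ((hasDerivAt_id (0 : ℝ)).const_add 1).mul_const (f x)
  exact (hasDerivAt_apply_add_smul hf x).unique (hlin.congr_of_eventuallyEq hray.symm)

lemma inner_gradient_le (hsmul : ∀ c : ℝ, 0 < c → ∀ x, f (c • x) = c * f x)
    (hadd : ∀ x y, f (x + y) ≤ f x + f y) (hf : DifferentiableAt ℝ f x) (y : E) :
    ⟪∇ f x, y⟫_ℝ ≤ f y := by
  set ψ : ℝ → ℝ := fun t => f (x + t • y) - t * f y
  have hmax : IsMaxOn ψ (Ici 0) 0 := fun t (ht : 0 ≤ t) => by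
    rcases ht.eq_or_lt with rfl | ht
    · simp
    · simpa [ψ, hsmul t ht] using hadd x (t • y)
  have hψ : HasDerivAt ψ (⟪∇ f x, y⟫_ℝ - f y) 0 := by
    have := (hasDerivAt_id (0 : ℝ)).mul_const (f y)
    rw [one_mul] at this
    exact (hasDerivAt_apply_add_smul hf y).sub this
  have hone : (1 : ℝ) ∈ posTangentConeAt (Ici 0) (0 : ℝ) :=
    mem_posTangentConeAt_of_segment_subset (by simpa [segment_eq_Icc] using Icc_subset_Ici_self)
  have := hmax.localize.hasFDerivWithinAt_nonpos hψ.hasFDerivAt.hasFDerivWithinAt hone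
  rw [ContinuousLinearMap.toSpanSingleton_apply, one_smul] at this
  linarith

lemma gradient_eq_of_inner_le_of_inner_eq {q : E} (hf : DifferentiableAt ℝ f x)
    (hle : ∀ y, ⟪q, y⟫_ℝ ≤ f y) (heq : ⟪q, x⟫_ℝ = f x) : ∇ f x = q := by
  have hmin : IsLocalMin (fun y => f y - ⟪q, y⟫_ℝ) x :=
    Filter.Eventually.of_forall fun y => by linarith [hle y]
  have hq : HasFDerivAt (fun y => ⟪q, y⟫_ℝ) (toDual ℝ E q) x := (toDual ℝ E q).hasFDerivAt
  have h0 := hmin.hasFDerivAt_eq_zero (hf.hasFDerivAt.sub hq)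
  rw [sub_eq_zero] at h0
  rw [gradient, h0, LinearIsometryEquiv.symm_apply_apply]

end Sublinear

lemma HasDerivAt.comp_hasGradientAt {F : Type*} [NormedAddCommGroup F] [InnerProductSpace ℝ F]
    [CompleteSpace F] {f : F → ℝ} {f' x : F} {g : ℝ → ℝ} {g' : ℝ}
    (hg : HasDerivAt g g' (f x)) (hf : HasGradientAt f f' x) :
    HasGradientAt (g ∘ f) (g' • f') x := by
  rw [hasGradientAt_iff_hasFDerivAt, map_smulₛₗ]
  exact hg.comp_hasFDerivAt x hf.hasFDerivAt

lemma ConvexOn.add_le_of_map_smul {E : Type*} [AddCommGroup E] [Module ℝ E] {f : E → ℝ}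
    (hconv : ConvexOn ℝ univ f)
    (hsmul : ∀ c : ℝ, 0 < c → ∀ x, f (c • x) = c * f x) (x y : E) :
    f (x + y) ≤ f x + f y := by
  have hmid := hconv.2 (mem_univ x) (mem_univ y) (by norm_num : (0 : ℝ) ≤ 1 / 2)
    (by norm_num : (0 : ℝ) ≤ 1 / 2) (by norm_num)
  have hxy : x + y = (2 : ℝ) • ((1 / 2 : ℝ) • x + (1 / 2 : ℝ) • y) := by
    rw [smul_add, smul_smul, smul_smul]; norm_num
  rw [hxy, hsmul 2 two_pos]
  simp only [smul_eq_mul] at hmid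
  linarith

lemma exists_pos_mul_norm_le {E : Type*} [NormedAddCommGroup E] [NormedSpace ℝ E]
    [FiniteDimensional ℝ E] {f : E → ℝ} (hf : Continuous f) (hpos : ∀ x ≠ 0, 0 < f x)
    (hsmul : ∀ c : ℝ, 0 < c → ∀ x, f (c • x) = c * f x) :
    ∃ c > 0, ∀ x, c * ‖x‖ ≤ f x := by
  have hf0 : f 0 = 0 := by
    have := hsmul 2 two_pos 0
    rw [smul_zero] at this
    linarith
  rcases subsingleton_or_nontrivial E with hE | hE
  · exact ⟨1, one_pos, fun x => by simp [Subsingleton.elim x 0, hf0]⟩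
  obtain ⟨z, hz, hmin⟩ := (isCompact_sphere (0 : E) 1).exists_isMinOn
    (NormedSpace.sphere_nonempty.2 zero_le_one) hf.continuousOn
  have hz0 : z ≠ 0 := ne_zero_of_mem_unit_sphere ⟨z, hz⟩
  refine ⟨f z, hpos z hz0, fun x => ?_⟩
  rcases eq_or_ne x 0 with rfl | hx
  · simp [hf0]
  have hnx : 0 < ‖x‖ := norm_pos_iff.2 hx
  have hunit : ‖x‖⁻¹ • x ∈ Metric.sphere (0 : E) 1 := by
    simp [norm_smul, hnx.ne']
  have := hmin hunit
  rw [mem_ofPred_eq, hsmul _ (inv_pos.2 hnx)] at this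
  rw [mul_comm]
  exact (le_inv_mul_iff₀ hnx).1 this

section DualNorm

variable {N : ℕ} {H : EuclideanSpace ℝ (Fin N) → ℝ} {c : ℝ}

local notation "E" => EuclideanSpace ℝ (Fin N)

lemma dualNorm_zero : dualNorm H 0 = 0 := by
  simp [dualNorm]

lemma dualNorm_smul {τ : ℝ} (hτ : 0 ≤ τ) (x : E) : dualNorm H (τ • x) = τ * dualNorm H x := by
  simp only [dualNorm, Real.mul_iSup_of_nonneg hτ, real_inner_smul_left, mul_div_assoc]

lemma pos_of_mul_norm_le (hc : 0 < c) (hlb : ∀ ξ, c * ‖ξ‖ ≤ H ξ) {ξ : E} (hξ : ξ ≠ 0) :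
    0 < H ξ :=
  (mul_pos hc (norm_pos_iff.2 hξ)).trans_le (hlb ξ)

lemma bddAbove_range_inner_div (hc : 0 < c) (hlb : ∀ ξ, c * ‖ξ‖ ≤ H ξ) (x : E) :
    BddAbove (range fun ξ : {ξ : E // ξ ≠ 0} => ⟪x, ξ.1⟫_ℝ / H ξ.1) := by
  refine ⟨‖x‖ / c, forall_mem_range.2 fun ξ => ?_⟩
  rw [div_le_div_iff₀ (pos_of_mul_norm_le hc hlb ξ.2) hc]
  calc ⟪x, ξ.1⟫_ℝ * c ≤ ‖x‖ * ‖ξ.1‖ * c := by gcongr; exact real_inner_le_norm _ _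
    _ = ‖x‖ * (c * ‖ξ.1‖) := by ring
    _ ≤ ‖x‖ * H ξ.1 := by gcongr; exact hlb _

lemma dualNorm_pos (hc : 0 < c) (hlb : ∀ ξ, c * ‖ξ‖ ≤ H ξ) {x : E} (hx : x ≠ 0) :
    0 < dualNorm H x := by
  have hxx : 0 < ⟪x, x⟫_ℝ / H x :=
    div_pos (real_inner_self_pos.2 hx) (pos_of_mul_norm_le hc hlb hx)
  exact hxx.trans_le (le_ciSup (bddAbove_range_inner_div hc hlb x) ⟨x, hx⟩)

lemma dualNorm_nonneg (hc : 0 < c) (hlb : ∀ ξ, c * ‖ξ‖ ≤ H ξ) (x : E) : 0 ≤ dualNorm H x := by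
  rcases eq_or_ne x 0 with rfl | hx
  · rw [dualNorm_zero]
  · exact (dualNorm_pos hc hlb hx).le

lemma inner_le_dualNorm_mul (hc : 0 < c) (hlb : ∀ ξ, c * ‖ξ‖ ≤ H ξ) (x ξ : E) :
    ⟪x, ξ⟫_ℝ ≤ dualNorm H x * H ξ := by
  rcases eq_or_ne ξ 0 with rfl | hξ
  · simpa using mul_nonneg (dualNorm_nonneg hc hlb x) (by simpa using hlb 0)
  · rw [← div_le_iff₀ (pos_of_mul_norm_le hc hlb hξ)]
    exact le_ciSup (bddAbove_range_inner_div hc hlb x) ⟨ξ, hξ⟩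

lemma dualNorm_le_of_inner_le (hpos : ∀ ξ : E, ξ ≠ 0 → 0 < H ξ) {x : E} {a : ℝ} (ha : 0 ≤ a)
    (h : ∀ ξ, ⟪x, ξ⟫_ℝ ≤ a * H ξ) : dualNorm H x ≤ a :=
  Real.iSup_le (fun ξ => (div_le_iff₀ (hpos _ ξ.2)).2 (h ξ)) ha

lemma dualNorm_add_le (hc : 0 < c) (hlb : ∀ ξ, c * ‖ξ‖ ≤ H ξ) (x y : E) :
    dualNorm H (x + y) ≤ dualNorm H x + dualNorm H y := by
  refine dualNorm_le_of_inner_le (fun ξ => pos_of_mul_norm_le hc hlb)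
    (add_nonneg (dualNorm_nonneg hc hlb x) (dualNorm_nonneg hc hlb y)) fun ξ => ?_
  rw [inner_add_left, add_mul]
  exact add_le_add (inner_le_dualNorm_mul hc hlb x ξ) (inner_le_dualNorm_mul hc hlb y ξ)

lemma dualNorm_le_inv_mul_norm (hc : 0 < c) (hlb : ∀ ξ, c * ‖ξ‖ ≤ H ξ) (x : E) :
    dualNorm H x ≤ c⁻¹ * ‖x‖ := by
  refine dualNorm_le_of_inner_le (fun ξ => pos_of_mul_norm_le hc hlb) (by positivity)
    fun ξ => ?_
  calc ⟪x, ξ⟫_ℝ ≤ ‖x‖ * ‖ξ‖ := real_inner_le_norm _ _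
    _ = c⁻¹ * ‖x‖ * (c * ‖ξ‖) := by field_simp
    _ ≤ c⁻¹ * ‖x‖ * H ξ := by gcongr; exact hlb ξ

lemma hasGradientAt_dualNorm_sq (hc : 0 < c) (hlb : ∀ ξ, c * ‖ξ‖ ≤ H ξ)
    (hH₀ : ∀ x : E, x ≠ 0 → DifferentiableAt ℝ (dualNorm H) x) (x : E) :
    HasGradientAt (fun y => dualNorm H y ^ 2) ((2 * dualNorm H x) • ∇ (dualNorm H) x) x := by
  rcases eq_or_ne x 0 with rfl | hx
  · rw [dualNorm_zero, mul_zero, zero_smul, hasGradientAt_iff_isLittleO_nhds_zero]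
    have hquad : (fun h : E => dualNorm H h ^ 2) =O[𝓝 0] fun h => ‖h‖ ^ 2 := by
      refine Asymptotics.IsBigO.of_bound (c⁻¹ ^ 2) (Eventually.of_forall fun h => ?_)
      rw [Real.norm_eq_abs, abs_pow, norm_pow, norm_norm, ← mul_pow]
      exact pow_le_pow_left₀ (abs_nonneg _) (by
        rw [abs_of_nonneg (dualNorm_nonneg hc hlb h)]; exact dualNorm_le_inv_mul_norm hc hlb h) 2
    simpa [dualNorm_zero] using hquad.trans_isLittleO (Asymptotics.isLittleO_norm_pow_id one_lt_two)
  · have := (hasDerivAt_pow 2 (dualNorm H x)).comp_hasGradientAt (hH₀ x hx).hasGradientAt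
    simpa [Function.comp_def] using this

end DualNorm

section Divergence

variable {N : ℕ}

local notation "E" => EuclideanSpace ℝ (Fin N)

lemma divg_eq_trace (F : E → E) (x : E) :
    divg F x = LinearMap.trace ℝ E (fderiv ℝ F x) := by
  rw [LinearMap.trace_eq_matrix_trace ℝ (EuclideanSpace.basisFun (Fin N) ℝ).toBasis,
    Matrix.trace, divg]
  simp [LinearMap.toMatrix_apply]

lemma divg_smul_self {φ : E → ℝ} {g x : E} (hφ : HasGradientAt φ g x) :
    divg (fun y => φ y • y) x = N * φ x + ⟪g, x⟫_ℝ := by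
  have hF : HasFDerivAt (fun y => φ y • y)
      (φ x • ContinuousLinearMap.id ℝ E + (toDual ℝ E g).smulRight x) x :=
    hφ.hasFDerivAt.smul (hasFDerivAt_id x)
  rw [divg_eq_trace, hF.fderiv]
  simp [mul_comm]

end Divergence

section Finsler

variable {N : ℕ} {H : EuclideanSpace ℝ (Fin N) → ℝ} {c : ℝ}

local notation "E" => EuclideanSpace ℝ (Fin N)

lemma apply_gradient_dualNorm (hsmul : ∀ a : ℝ, 0 < a → ∀ ξ, H (a • ξ) = a * H ξ)
    (hadd : ∀ ξ η, H (ξ + η) ≤ H ξ + H η) (hc : 0 < c) (hlb : ∀ ξ, c * ‖ξ‖ ≤ H ξ)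
    (hH : ∀ ξ : E, ξ ≠ 0 → DifferentiableAt ℝ H ξ) {x : E} (hx : x ≠ 0)
    (hH₀ : DifferentiableAt ℝ (dualNorm H) x) : H (∇ (dualNorm H) x) = 1 := by
  set g := ∇ (dualNorm H) x
  have hsmul₀ : ∀ a : ℝ, 0 < a → ∀ y, dualNorm H (a • y) = a * dualNorm H y :=
    fun a ha => dualNorm_smul ha.le
  have heuler : ⟪g, x⟫_ℝ = dualNorm H x := inner_gradient_self hsmul₀ hH₀
  have hpos := dualNorm_pos hc hlb hx
  have hge : 1 ≤ H g := by
    have := inner_le_dualNorm_mul hc hlb x g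
    rw [real_inner_comm, heuler] at this
    exact (le_mul_iff_one_le_right hpos).1 this
  have hg : g ≠ 0 := by
    rintro hg
    rw [hg, inner_zero_left] at heuler
    exact hpos.ne heuler
  -- the bipolar inequality `H ≤ H₀₀` at `g`, with `∇ H g` as the witness in the dual unit ball
  set p := ∇ H g
  have hp : dualNorm H p ≤ 1 :=
    dualNorm_le_of_inner_le (fun ξ => pos_of_mul_norm_le hc hlb) zero_le_one fun ξ => by
      rw [one_mul]; exact inner_gradient_le hsmul hadd (hH g hg) ξ
  refine le_antisymm ?_ hge
  calc H g = ⟪p, g⟫_ℝ := (inner_gradient_self hsmul (hH g hg)).symm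
    _ = ⟪g, p⟫_ℝ := real_inner_comm _ _
    _ ≤ dualNorm H p := inner_gradient_le hsmul₀ (dualNorm_add_le hc hlb) hH₀ p
    _ ≤ 1 := hp

lemma apply_smul_gradient_dualNorm_smul_gradient (hhom : ∀ (a : ℝ) ξ, H (a • ξ) = |a| * H ξ)
    (hadd : ∀ ξ η, H (ξ + η) ≤ H ξ + H η) (hc : 0 < c) (hlb : ∀ ξ, c * ‖ξ‖ ≤ H ξ)
    (hH : ∀ ξ : E, ξ ≠ 0 → DifferentiableAt ℝ H ξ) {x : E} (hx : x ≠ 0)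
    (hH₀ : DifferentiableAt ℝ (dualNorm H) x) (a : ℝ) :
    H (a • ∇ (dualNorm H) x) • ∇ H (a • ∇ (dualNorm H) x) = (a / dualNorm H x) • x := by
  set g := ∇ (dualNorm H) x
  have hHg : H g = 1 :=
    apply_gradient_dualNorm (fun a ha ξ => by rw [hhom, abs_of_pos ha]) hadd hc hlb hH hx hH₀
  have hH0 : H 0 = 0 := by simpa using hhom 0 0
  rcases eq_or_ne a 0 with rfl | ha
  · simp [hH0]
  have heuler : ⟪g, x⟫_ℝ = dualNorm H x :=
    inner_gradient_self (fun a ha => dualNorm_smul ha.le) hH₀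
  have hpos := dualNorm_pos hc hlb hx
  have hg : g ≠ 0 := by
    rintro hg
    rw [hg, hH0] at hHg
    exact zero_ne_one hHg
  set s := a / |a|
  have hs : |s| = 1 := by rw [abs_div, abs_abs, div_self (abs_ne_zero.2 ha)]
  set q := (s / dualNorm H x) • x
  have hgrad : ∇ H (a • g) = q := by
    refine gradient_eq_of_inner_le_of_inner_eq (hH _ (smul_ne_zero ha hg)) (fun η => ?_) ?_
    · have := inner_le_dualNorm_mul hc hlb x (s • η)
      rw [hhom, hs, one_mul, real_inner_smul_right] at this
      rw [real_inner_smul_left, div_mul_eq_mul_div, div_le_iff₀ hpos, mul_comm (H η)]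
      exact this
    · rw [real_inner_smul_left, real_inner_smul_right, real_inner_comm, heuler, hhom, hHg]
      field_simp
      rw [div_mul_eq_mul_div, div_eq_iff (abs_ne_zero.2 ha), abs_mul_abs_self]
  rw [hgrad, hhom, hHg, mul_one, smul_smul, ← mul_div_assoc, mul_div_cancel₀ a (abs_ne_zero.2 ha)]

lemma apply_gradient_comp_dualNorm_sq_smul_gradient (hhom : ∀ (a : ℝ) ξ, H (a • ξ) = |a| * H ξ)
    (hadd : ∀ ξ η, H (ξ + η) ≤ H ξ + H η) (hc : 0 < c) (hlb : ∀ ξ, c * ‖ξ‖ ≤ H ξ)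
    (hH : ∀ ξ : E, ξ ≠ 0 → DifferentiableAt ℝ H ξ)
    (hH₀ : ∀ x : E, x ≠ 0 → DifferentiableAt ℝ (dualNorm H) x)
    {f f' : ℝ → ℝ} (hf : ∀ r, HasDerivAt f (f' r) r) (y : E) :
    H (∇ (fun z => f (dualNorm H z ^ 2)) y) • ∇ H (∇ (fun z => f (dualNorm H z ^ 2)) y)
      = (2 * f' (dualNorm H y ^ 2)) • y := by
  have hgrad : ∇ (fun z => f (dualNorm H z ^ 2)) y
      = (f' (dualNorm H y ^ 2) * (2 * dualNorm H y)) • ∇ (dualNorm H) y := by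
    rw [← smul_smul]
    exact ((hf _).comp_hasGradientAt (hasGradientAt_dualNorm_sq hc hlb hH₀ y)).gradient
  rw [hgrad]
  rcases eq_or_ne y 0 with rfl | hy
  · simp [dualNorm_zero, show H 0 = 0 by simpa using hhom 0 0]
  · rw [apply_smul_gradient_dualNorm_smul_gradient hhom hadd hc hlb hH hy (hH₀ y hy)]
    congr 1
    field_simp [(dualNorm_pos hc hlb hy).ne']

lemma finslerLap_comp_dualNorm_sq (hhom : ∀ (a : ℝ) ξ, H (a • ξ) = |a| * H ξ)
    (hadd : ∀ ξ η, H (ξ + η) ≤ H ξ + H η) (hc : 0 < c) (hlb : ∀ ξ, c * ‖ξ‖ ≤ H ξ)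
    (hH : ∀ ξ : E, ξ ≠ 0 → DifferentiableAt ℝ H ξ)
    (hH₀ : ∀ x : E, x ≠ 0 → DifferentiableAt ℝ (dualNorm H) x)
    {f f' : ℝ → ℝ} {f'' : ℝ} (hf : ∀ r, HasDerivAt f (f' r) r) (x : E)
    (hf' : HasDerivAt f' f'' (dualNorm H x ^ 2)) :
    finslerLap H (fun y => f (dualNorm H y ^ 2)) x
      = 2 * N * f' (dualNorm H x ^ 2) + 4 * dualNorm H x ^ 2 * f'' := by
  have hφ := (hf'.const_mul 2).comp_hasGradientAt (f := fun y => dualNorm H y ^ 2)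
    (hasGradientAt_dualNorm_sq hc hlb hH₀ x)
  have heuler : dualNorm H x * ⟪∇ (dualNorm H) x, x⟫_ℝ = dualNorm H x ^ 2 := by
    rcases eq_or_ne x 0 with rfl | hx
    · simp [dualNorm_zero]
    · rw [inner_gradient_self (fun a ha => dualNorm_smul ha.le) (hH₀ x hx), sq]
  rw [finslerLap, funext (apply_gradient_comp_dualNorm_sq_smul_gradient hhom hadd hc hlb hH hH₀ hf),
    divg_smul_self (φ := fun y => 2 * f' (dualNorm H y ^ 2)) hφ,
    real_inner_smul_left, real_inner_smul_left]
  linear_combination (4 * f'') * heuler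

lemma finslerLap_mul_exp_dualNorm_sq (hhom : ∀ (a : ℝ) ξ, H (a • ξ) = |a| * H ξ)
    (hadd : ∀ ξ η, H (ξ + η) ≤ H ξ + H η) (hc : 0 < c) (hlb : ∀ ξ, c * ‖ξ‖ ≤ H ξ)
    (hH : ∀ ξ : E, ξ ≠ 0 → DifferentiableAt ℝ H ξ)
    (hH₀ : ∀ x : E, x ≠ 0 → DifferentiableAt ℝ (dualNorm H) x) (C K : ℝ) (x : E) :
    finslerLap H (fun y => C * exp (K * dualNorm H y ^ 2)) x
      = 2 * K * (N + 2 * K * dualNorm H x ^ 2) * (C * exp (K * dualNorm H x ^ 2)) := by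
  have hexp : ∀ C r : ℝ, HasDerivAt (fun r => C * exp (K * r)) (C * K * exp (K * r)) r :=
    fun C r => (((hasDerivAt_id r).const_mul K).exp.const_mul C).congr_deriv (by
      rw [id, mul_one]; ring)
  rw [finslerLap_comp_dualNorm_sq hhom hadd hc hlb hH hH₀ (hexp C) x (hexp (C * K) _)]
  ring

end Finsler

lemma hasDerivAt_rpow_mul_exp_div (N Λ a : ℝ) {t : ℝ} (ht : 1 - 4 * Λ * t ≠ 0) :
    HasDerivAt (fun s => (1 - 4 * Λ * s) ^ (-N / 2) * exp (Λ * a / (1 - 4 * Λ * s)))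
      (2 * (Λ / (1 - 4 * Λ * t)) * (N + 2 * (Λ / (1 - 4 * Λ * t)) * a)
        * ((1 - 4 * Λ * t) ^ (-N / 2) * exp (Λ * a / (1 - 4 * Λ * t)))) t := by
  have hσ : HasDerivAt (fun s : ℝ => 1 - 4 * Λ * s) (-(4 * Λ)) t := by
    simpa using ((hasDerivAt_id t).const_mul (4 * Λ)).const_sub 1
  have hpow := (Real.hasDerivAt_rpow_const (p := -N / 2) (Or.inl ht)).comp t hσ
  have hexp := ((hasDerivAt_const t (Λ * a)).div hσ ht).exp
  refine (hpow.mul hexp).congr_deriv ?_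
  simp only [Function.comp_apply, Pi.div_apply]
  rw [Real.rpow_sub_one ht]
  field_simp
  ring

theorem stmt_11 {N : ℕ} (H : EuclideanSpace ℝ (Fin N) → ℝ)
    (hH0 : ∀ ξ, 0 ≤ H ξ) (hHz : ∀ ξ, H ξ = 0 ↔ ξ = 0)
    (hconv : ConvexOn ℝ Set.univ H)
    (hhom : ∀ (a : ℝ) ξ, H (a • ξ) = |a| * H ξ)
    (hC1 : ContDiffOn ℝ 1 H {ξ | ξ ≠ 0})
    (hC1dual : ContDiffOn ℝ 1 (dualNorm H) {x | x ≠ 0})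
    (Λ : ℝ) (hΛ : 0 < Λ)
    (v : EuclideanSpace ℝ (Fin N) → ℝ → ℝ)
    (hv : ∀ x t, v x t = (1 - 4 * Λ * t) ^ (-(N : ℝ) / 2)
      * Real.exp (Λ * (dualNorm H x) ^ 2 / (1 - 4 * Λ * t))) :
    ∀ (x : EuclideanSpace ℝ (Fin N)) (t : ℝ), t ∈ Set.Ioo 0 (1 / (4 * Λ)) →
      deriv (fun s => v x s) t = finslerLap H (fun y => v y t) x := by
  rintro x t ⟨-, ht⟩
  have hσ : 0 < 1 - 4 * Λ * t := by
    rw [lt_div_iff₀ (by positivity)] at ht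
    linarith
  have hsmul : ∀ a : ℝ, 0 < a → ∀ ξ, H (a • ξ) = a * H ξ := fun a ha ξ => by
    rw [hhom, abs_of_pos ha]
  obtain ⟨c, hc, hlb⟩ := exists_pos_mul_norm_le
    (continuousOn_univ.1 (hconv.continuousOn isOpen_univ))
    (fun ξ hξ => (hH0 ξ).lt_of_ne' (mt (hHz ξ).1 hξ)) hsmul
  have hH : ∀ ξ, ξ ≠ 0 → DifferentiableAt ℝ H ξ := fun ξ hξ =>
    (hC1.differentiableOn one_ne_zero).differentiableAt (isOpen_ne.mem_nhds hξ)
  have hH₀ : ∀ x, x ≠ 0 → DifferentiableAt ℝ (dualNorm H) x := fun x hx =>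
    (hC1dual.differentiableOn one_ne_zero).differentiableAt (isOpen_ne.mem_nhds hx)
  have hprofile : (fun y => v y t) = fun y => (1 - 4 * Λ * t) ^ (-(N : ℝ) / 2)
      * exp (Λ / (1 - 4 * Λ * t) * dualNorm H y ^ 2) := by
    funext y
    rw [hv, div_mul_eq_mul_div]
  rw [funext (hv x), (hasDerivAt_rpow_mul_exp_div N Λ _ hσ.ne').deriv, hprofile,
    finslerLap_mul_exp_dualNorm_sq hhom (hconv.add_le_of_map_smul hsmul) hc hlb hH hH₀,
    div_mul_eq_mul_div]
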